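/- arXiv:1902.00051 — 6 statements merged into one kernel-verified Lean document; each statement's English description precedes it below -/
import Mathlib

section
/- Let f be a real-valued function on [a,b], r ≥ 0 a real number, and E ⊆ [a,b] a set such that f is differentiable at each point x of E with |f'(x)| ≤ r. Then the Lebesgue outer measure of f(E) is at most r times the Lebesgue outer measure of E. -/
open MeasureTheory Set Filter Topology
open scoped NNReal ENNReal

/-!
Cover `s` by countably many relatively measurable pieces `s ∩ t n` on which `f` is
`δ`-close to a linear map `A n = f' y` with `y ∈ s`. On such a piece `f` expands measure by at
most `m'` for any `m' > |det A n|`, so summing over the pieces gives `μ (f '' s) ≤ m' * μ s`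
for every `m' > m`. Letting `m' ↓ m` settles the case `μ s < ∞`, and exhausting `s` by balls
the general one.
-/

namespace MeasureTheory

theorem tsum_measure_inter_le {α ι : Type*} [MeasurableSpace α] [Countable ι] (μ : Measure α)
    (s : Set α) {t : ι → Set α} (hd : Pairwise (Function.onFun Disjoint t))
    (hm : ∀ i, MeasurableSet (t i)) : ∑' i, μ (s ∩ t i) ≤ μ s := by
  simp_rw [inter_comm s, ← Measure.restrict_apply (hm _)]
  rw [← measure_iUnion hd hm]
  exact (measure_mono (subset_univ _)).trans_eq (Measure.restrict_apply_univ s)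

variable {E : Type*} [NormedAddCommGroup E] [NormedSpace ℝ E] [FiniteDimensional ℝ E]
  [MeasurableSpace E] [BorelSpace E] (μ : Measure E) [μ.IsAddHaarMeasure]
  {f : E → E} {f' : E → E →L[ℝ] E} {s : Set E} {m : ℝ≥0}

theorem addHaar_image_le_mul_of_abs_det_le_of_lt (hf' : ∀ x ∈ s, HasFDerivWithinAt f (f' x) s x)
    (hdet : ∀ x ∈ s, |(f' x).det| ≤ m) {m' : ℝ≥0} (hm : m < m') :
    μ (f '' s) ≤ m' * μ s := by
  rcases s.eq_empty_or_nonempty with rfl | hs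
  · simp
  have hδ : ∀ A : E →L[ℝ] E, ∃ δ : ℝ≥0, 0 < δ ∧ (|A.det| ≤ m →
      ∀ t, ApproximatesLinearOn f A t δ → μ (f '' t) ≤ m' * μ t) := by
    intro A
    by_cases hA : |A.det| ≤ m
    · have : ENNReal.ofReal |A.det| < m' :=
        ENNReal.coe_lt_coe.2 ((Real.toNNReal_le_iff_le_coe.2 hA).trans_lt hm)
      obtain ⟨δ, hδ, δpos⟩ := ((addHaar_image_le_mul_of_det_lt μ A this).and
        self_mem_nhdsWithin).exists
      exact ⟨δ, δpos, fun _ t ht => hδ t f ht⟩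
    · exact ⟨1, one_pos, fun h => absurd h hA⟩
  choose δ δpos hδ using hδ
  obtain ⟨t, A, t_disj, t_meas, s_sub, t_approx, A_eq⟩ :=
    exists_partition_approximatesLinearOn_of_hasFDerivWithinAt f s f' hf' δ fun A => (δpos A).ne'
  have hA : ∀ n, |(A n).det| ≤ m := fun n => by
    obtain ⟨y, hy, hAy⟩ := A_eq hs n
    exact hAy ▸ hdet y hy
  calc
    μ (f '' s) ≤ μ (⋃ n, f '' (s ∩ t n)) := by
      rw [← image_iUnion, ← inter_iUnion, inter_eq_left.2 s_sub]
    _ ≤ ∑' n, μ (f '' (s ∩ t n)) := measure_iUnion_le _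
    _ ≤ ∑' n, m' * μ (s ∩ t n) := ENNReal.tsum_le_tsum fun n => hδ _ (hA n) _ (t_approx n)
    _ = m' * ∑' n, μ (s ∩ t n) := ENNReal.tsum_mul_left
    _ ≤ m' * μ s := by gcongr; exact tsum_measure_inter_le μ s t_disj t_meas

theorem addHaar_image_le_mul_of_abs_det_le_of_measure_ne_top (hs : μ s ≠ ∞)
    (hf' : ∀ x ∈ s, HasFDerivWithinAt f (f' x) s x) (hdet : ∀ x ∈ s, |(f' x).det| ≤ m) :
    μ (f '' s) ≤ m * μ s := by
  have hlim : Tendsto (fun m' : ℝ≥0 => (m' : ℝ≥0∞) * μ s) (𝓝[>] m) (𝓝 (m * μ s)) :=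
    ENNReal.Tendsto.mul_const (ENNReal.tendsto_coe.2 nhdsWithin_le_nhds) (.inr hs)
  exact ge_of_tendsto hlim (eventually_nhdsWithin_of_forall fun m' hm' =>
    addHaar_image_le_mul_of_abs_det_le_of_lt μ hf' hdet hm')

theorem addHaar_image_le_mul_of_abs_det_le (hf' : ∀ x ∈ s, HasFDerivWithinAt f (f' x) s x)
    (hdet : ∀ x ∈ s, |(f' x).det| ≤ m) : μ (f '' s) ≤ m * μ s := by
  set s' : ℕ → Set E := fun n => s ∩ Metric.closedBall 0 n
  have hmono : Monotone s' := fun i j hij =>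
    inter_subset_inter_right _ (Metric.closedBall_subset_closedBall (by exact_mod_cast hij))
  have hs : s = ⋃ n, s' n := by rw [← inter_iUnion, Metric.iUnion_closedBall_nat, inter_univ]
  calc
    μ (f '' s) = ⨆ n, μ (f '' s' n) := by
      rw [hs, image_iUnion]; exact Monotone.measure_iUnion fun i j hij => image_mono (hmono hij)
    _ ≤ ⨆ n, m * μ (s' n) := iSup_mono fun n =>
      addHaar_image_le_mul_of_abs_det_le_of_measure_ne_top μ
        (measure_inter_lt_top_of_right_ne_top measure_closedBall_lt_top.ne).ne
        (fun x hx => (hf' x hx.1).mono inter_subset_left) fun x hx => hdet x hx.1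
    _ ≤ m * μ s := iSup_le fun n => by gcongr; exact inter_subset_left

end MeasureTheory

theorem saks_inequality_general (a b r : ℝ) (f f' : ℝ → ℝ) (E : Set ℝ)
    (hE : E ⊆ Icc a b)
    (hderiv : ∀ x ∈ E, HasDerivWithinAt f (f' x) (Icc a b) x)
    (hbound : ∀ x ∈ E, |f' x| ≤ r) :
    volume (f '' E) ≤ ENNReal.ofReal r * volume E :=
  addHaar_image_le_mul_of_abs_det_le volume
    (fun x hx => ((hderiv x hx).mono hE).hasFDerivWithinAt) fun x hx => by
      simpa using (hbound x hx).trans (Real.le_coe_toNNReal r)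

/-- Saks' inequality: if `f : [a,b] → ℝ` is differentiable at every point `x` of
`E ⊆ [a,b]` with `|f'(x)| ≤ r`, then `m*(f(E)) ≤ r · m*(E)`. -/
theorem saks_inequality (a b r : ℝ) (hr : 0 ≤ r) (f f' : ℝ → ℝ) (E : Set ℝ)
    (hE : E ⊆ Icc a b)
    (hderiv : ∀ x ∈ E, HasDerivWithinAt f (f' x) (Icc a b) x)
    (hbound : ∀ x ∈ E, |f' x| ≤ r) :
    volume (f '' E) ≤ ENNReal.ofReal r * volume E :=
  saks_inequality_general a b r f f' E hE hderiv hbound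
end

section
/- Let f be a real-valued function on [a,b] and E ⊆ [a,b] a set such that f is differentiable at every point of E with f'(x) = 0 for all x ∈ E. Then f(E) has Lebesgue measure zero. -/
open MeasureTheory Set

/-- If `f : [a,b] → ℝ` is differentiable with derivative `0` at every point of
`E ⊆ [a,b]`, then `f(E)` has Lebesgue measure zero. -/
theorem image_null_of_deriv_zero (a b : ℝ) (f : ℝ → ℝ) (E : Set ℝ)
    (hE : E ⊆ Icc a b)
    (hderiv : ∀ x ∈ E, HasDerivWithinAt f 0 (Icc a b) x) :
    volume (f '' E) = 0 := by
  have := addHaar_image_eq_zero_of_det_fderivWithin_eq_zero (volume : Measure ℝ)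
    (f' := fun _ => (0 : ℝ →L[ℝ] ℝ))
    (fun x hx => ((hderiv x hx).mono hE).hasFDerivWithinAt.congr_fderiv (by ext; simp))
    (fun x hx => by simp [ContinuousLinearMap.det])
  simpa using this
end

section
/- Let f be a real-valued measurable function on [a,b] and E ⊆ [a,b] a measurable set such that f is differentiable at each point of E. Then the outer measure of f(E) satisfies m*(f(E)) ≤ ∫_E |f'(x)| dx. -/
open MeasureTheory Set

/-- If `f` is a real-valued measurable function on `[a,b]` and `E ⊆ [a,b]` is a
measurable set on which `f` is differentiable with derivative `f'`, then
`m*(f(E)) ≤ ∫_E |f'(x)| dx`. -/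
theorem outer_measure_image_le_integral_abs_deriv
    (a b : ℝ) (f f' : ℝ → ℝ) (E : Set ℝ)
    (hmeas : ∀ c : ℝ, MeasurableSet {x ∈ Icc a b | c < f x})
    (hE : E ⊆ Icc a b) (hEmeas : MeasurableSet E)
    (hderiv : ∀ x ∈ E, HasDerivWithinAt f (f' x) (Icc a b) x) :
    volume (f '' E) ≤ ∫⁻ x in E, ENNReal.ofReal |f' x| := by
  simpa only [ContinuousLinearMap.det_toSpanSingleton] using
    addHaar_image_le_lintegral_abs_det_fderiv volume hEmeas
      (fun x hx => ((hderiv x hx).mono hE).hasFDerivWithinAt)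
end

section
/- A real-valued function f on [a,b] is absolutely continuous if and only if it satisfies all three of: (i) f is continuous on [a,b]; (ii) f is of bounded variation on [a,b]; (iii) f maps sets of Lebesgue measure zero to sets of Lebesgue measure zero. -/
/-!
Absolute continuity in the ε-δ sense agrees with Mathlib's `AbsolutelyContinuousOnInterval`,
which already yields continuity and bounded variation. For Luzin's property (N), cover a null
set by an open set of small measure: the image of each of its components is an interval whose
length is an increment of `f` over a subinterval of that component, so absolute continuity
bounds the total measure of the image.

Conversely, a function of bounded variation is differentiable almost everywhere with `|f'|`
integrable. Property (N) makes the points of non-differentiability invisible in the image, so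
`|f y - f x| ≤ λ (f '' [x, y]) ≤ ∫_x^y |f'|`, and `f` is dominated by the absolutely continuous
indefinite integral of `|f'|`.
-/

open MeasureTheory Set

/-- `f` is absolutely continuous on `[a,b]`: for every `ε > 0` there is `δ > 0` such that
for every finite disjoint collection of open intervals `(xᵢ, yᵢ) ⊆ [a,b]` of total length
less than `δ`, we have `Σ |f yᵢ - f xᵢ| < ε`. -/
def AbsolutelyContinuousOn (f : ℝ → ℝ) (a b : ℝ) : Prop :=
  ∀ ε > (0:ℝ), ∃ δ > (0:ℝ), ∀ n : ℕ, ∀ x y : Fin n → ℝ,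
    (∀ i, a ≤ x i ∧ x i ≤ y i ∧ y i ≤ b) →
    (∀ i j, i ≠ j → Disjoint (Ioo (x i) (y i)) (Ioo (x j) (y j))) →
    ∑ i, (y i - x i) < δ → ∑ i, |f (y i) - f (x i)| < ε

section

variable {f : ℝ → ℝ} {a b : ℝ}

theorem AbsolutelyContinuousOn.exists_finset_sum_lt.{u} (hf : AbsolutelyContinuousOn f a b)
    {ε : ℝ} (hε : 0 < ε) :
    ∃ δ > 0, ∀ {ι : Type u} (s : Finset ι) (x y : ι → ℝ),
      (∀ i ∈ s, a ≤ x i ∧ x i ≤ y i ∧ y i ≤ b) →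
      (s : Set ι).PairwiseDisjoint (fun i => Ioo (x i) (y i)) →
      ∑ i ∈ s, (y i - x i) < δ → ∑ i ∈ s, |f (y i) - f (x i)| < ε := by
  obtain ⟨δ, hδ, H⟩ := hf ε hε
  refine ⟨δ, hδ, fun {ι} s x y hxy hdisj hlen => ?_⟩
  let e := s.equivFin.symm
  have hsum (g : ι → ℝ) : ∑ i ∈ s, g i = ∑ k, g (e k) := by
    rw [← Finset.sum_coe_sort s g]
    exact (e.sum_comp fun i : s => g i).symm
  rw [hsum] at hlen ⊢
  exact H _ (fun k => x (e k)) (fun k => y (e k)) (fun k => hxy _ (e k).2)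
    (fun k l hkl => hdisj (e k).2 (e l).2 (Subtype.coe_injective.ne (e.injective.ne hkl))) hlen

theorem abs_sub_max_min (g : ℝ → ℝ) (p q : ℝ) : |g (max p q) - g (min p q)| = |g p - g q| := by
  rcases le_total p q with h | h <;> simp [h, abs_sub_comm]

theorem AbsolutelyContinuousOn.absolutelyContinuousOnInterval (hf : AbsolutelyContinuousOn f a b)
    (hab : a ≤ b) : AbsolutelyContinuousOnInterval f a b := by
  rw [absolutelyContinuousOnInterval_iff]
  intro ε hε
  obtain ⟨δ, hδ, H⟩ := hf.exists_finset_sum_lt hε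
  refine ⟨δ, hδ, fun ⟨n, I⟩ ⟨hI, hdisj⟩ hlen => ?_⟩
  simp only [uIcc_of_le hab] at hI
  simp only [Real.dist_eq, ← max_sub_min_eq_abs'] at hlen
  have := H (Finset.range n) (fun i => min (I i).1 (I i).2) (fun i => max (I i).1 (I i).2)
    (fun i hi => ?_) (hdisj.mono fun i => Ioo_subset_Ioc_self) hlen
  · simpa only [Real.dist_eq, abs_sub_max_min] using this
  obtain ⟨⟨hp, hp'⟩, ⟨hq, hq'⟩⟩ := hI i hi
  exact ⟨le_min hp hq, min_le_max, max_le hp' hq'⟩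

theorem AbsolutelyContinuousOnInterval.absolutelyContinuousOn
    (hf : AbsolutelyContinuousOnInterval f a b) (hab : a ≤ b) : AbsolutelyContinuousOn f a b := by
  intro ε hε
  obtain ⟨δ, hδ, H⟩ := (absolutelyContinuousOnInterval_iff f a b).1 hf ε hε
  refine ⟨δ, hδ, fun n x y hxy hdisj hlen => ?_⟩
  let I : ℕ → ℝ × ℝ := fun k => if h : k < n then (x ⟨k, h⟩, y ⟨k, h⟩) else 0
  have hsum (g : ℝ → ℝ → ℝ) : ∑ k ∈ Finset.range n, g (I k).1 (I k).2 = ∑ i, g (x i) (y i) := by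
    rw [Finset.sum_range]
    exact Finset.sum_congr rfl fun i _ => by simp only [I, dif_pos i.isLt, Fin.eta]
  have hdist (i : Fin n) : dist (x i) (y i) = y i - x i := by
    rw [Real.dist_eq, abs_sub_comm, abs_of_nonneg (sub_nonneg.2 (hxy i).2.1)]
  have := H (n, I) ⟨fun k hk => ?_, fun k hk l hl hkl => ?_⟩ ?_
  · calc ∑ i, |f (y i) - f (x i)| = ∑ k ∈ Finset.range n, dist (f (I k).1) (f (I k).2) := by
          rw [hsum fun p q => dist (f p) (f q)]
          simp only [dist_comm (f (x _)), Real.dist_eq]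
      _ < ε := this
  · simp only [Finset.mem_range] at hk
    simp only [I, dif_pos hk, uIcc_of_le hab]
    exact ⟨⟨(hxy _).1, (hxy _).2.1.trans (hxy _).2.2⟩, ⟨(hxy _).1.trans (hxy _).2.1, (hxy _).2.2⟩⟩
  · simp only [Finset.coe_range, mem_Iio] at hk hl
    simp only [Function.onFun, I, dif_pos hk, dif_pos hl]
    -- over `ℝ`, two `Ioc`s are disjoint exactly when the corresponding `Ioo`s are
    rw [uIoc_of_le (hxy _).2.1, uIoc_of_le (hxy _).2.1, Ioc_disjoint_Ioc, ← Ioo_disjoint_Ioo]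
    exact hdisj _ _ (Fin.ne_of_val_ne hkl)
  · rwa [hsum dist, Finset.sum_congr rfl fun i _ => hdist i]

theorem AbsolutelyContinuousOn.continuousOn (hf : AbsolutelyContinuousOn f a b) (hab : a ≤ b) :
    ContinuousOn f (Icc a b) := by
  simpa only [uIcc_of_le hab] using (hf.absolutelyContinuousOnInterval hab).continuousOn

theorem AbsolutelyContinuousOn.boundedVariationOn (hf : AbsolutelyContinuousOn f a b)
    (hab : a ≤ b) : BoundedVariationOn f (Icc a b) := by
  simpa only [uIcc_of_le hab] using (hf.absolutelyContinuousOnInterval hab).boundedVariationOn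

theorem AbsolutelyContinuousOn.of_abs_sub_le {g : ℝ → ℝ} (hg : AbsolutelyContinuousOn g a b)
    (h : ∀ x y, a ≤ x → x ≤ y → y ≤ b → |f y - f x| ≤ g y - g x) :
    AbsolutelyContinuousOn f a b := by
  intro ε hε
  obtain ⟨δ, hδ, H⟩ := hg ε hε
  refine ⟨δ, hδ, fun n x y hxy hdisj hlen =>
    (Finset.sum_le_sum fun i _ => ?_).trans_lt (H n x y hxy hdisj hlen)⟩
  obtain ⟨hax, hxy, hyb⟩ := hxy i
  exact (h _ _ hax hxy hyb).trans (le_abs_self _)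

theorem ContinuousOn.exists_image_Icc_subset_uIcc {c d : ℝ} (hf : ContinuousOn f (Icc c d))
    (hcd : c ≤ d) : ∃ p q, c ≤ p ∧ p ≤ q ∧ q ≤ d ∧ f '' Icc c d ⊆ uIcc (f p) (f q) := by
  obtain ⟨u, hu, hmin⟩ := isCompact_Icc.exists_isMinOn (nonempty_Icc.2 hcd) hf
  obtain ⟨v, hv, hmax⟩ := isCompact_Icc.exists_isMaxOn (nonempty_Icc.2 hcd) hf
  have himage : f '' Icc c d ⊆ uIcc (f u) (f v) :=
    image_subset_iff.2 fun z hz => Icc_subset_uIcc ⟨hmin hz, hmax hz⟩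
  rcases le_total u v with h | h
  · exact ⟨u, v, hu.1, h, hv.2, himage⟩
  · exact ⟨v, u, hv.1, h, hu.2, uIcc_comm (f u) (f v) ▸ himage⟩

theorem IsPreconnected.exists_Ioo_subset_volume_image_le {s : Set ℝ}
    (hf : ContinuousOn f (Icc a b)) (hab : a ≤ b) (hs : IsPreconnected s) (hsab : s ⊆ Icc a b) :
    ∃ x y, a ≤ x ∧ x ≤ y ∧ y ≤ b ∧ Ioo x y ⊆ s ∧ volume (f '' s) ≤ ENNReal.ofReal |f y - f x| := by
  rcases s.eq_empty_or_nonempty with rfl | hne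
  · exact ⟨a, a, le_rfl, le_rfl, hab, by simp, by simp⟩
  have hbdd : BddBelow s := bddBelow_Icc.mono hsab
  have hbdd' : BddAbove s := bddAbove_Icc.mono hsab
  have hsub : Icc (sInf s) (sSup s) ⊆ Icc a b :=
    Icc_subset_Icc (le_csInf hne fun z hz => (hsab hz).1) (csSup_le hne fun z hz => (hsab hz).2)
  obtain ⟨x, y, hx, hxy, hy, himage⟩ :=
    (hf.mono hsub).exists_image_Icc_subset_uIcc (csInf_le_csSup hne hbdd hbdd')
  refine ⟨x, y, (hsub ⟨hx, hxy.trans hy⟩).1, hxy, (hsub ⟨hx.trans hxy, hy⟩).2,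
    (Ioo_subset_Ioo hx hy).trans (IsConnected.Ioo_csInf_csSup_subset ⟨hne, hs⟩ hbdd hbdd'), ?_⟩
  calc volume (f '' s) ≤ volume (uIcc (f x) (f y)) :=
        measure_mono ((image_mono (subset_Icc_csInf_csSup hbdd hbdd')).trans himage)
    _ = ENNReal.ofReal |f y - f x| := Real.volume_interval

theorem pairwiseDisjoint_image_connectedComponentIn {X : Type*} [TopologicalSpace X] (U : Set X) :
    (connectedComponentIn U '' U).PairwiseDisjoint id := by
  rintro _ ⟨z, -, rfl⟩ _ ⟨w, -, rfl⟩ hne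
  refine Set.disjoint_left.2 fun t htz htw => hne ?_
  rw [connectedComponentIn_eq htz, connectedComponentIn_eq htw]

theorem IsOpen.countable_image_connectedComponentIn {X : Type*} [TopologicalSpace X]
    [TopologicalSpace.SeparableSpace X] [LocallyConnectedSpace X] {U : Set X} (hU : IsOpen U) :
    (connectedComponentIn U '' U).Countable :=
  (pairwiseDisjoint_image_connectedComponentIn U).countable_of_isOpen
    (by rintro _ ⟨z, -, rfl⟩; exact hU.connectedComponentIn)
    (by rintro _ ⟨z, hz, rfl⟩; exact ⟨z, mem_connectedComponentIn hz⟩)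

theorem AbsolutelyContinuousOn.exists_volume_image_le (hf : AbsolutelyContinuousOn f a b)
    (hab : a ≤ b) {ε : ℝ} (hε : 0 < ε) :
    ∃ δ > 0, ∀ U ⊆ Ioo a b, IsOpen U → volume U < ENNReal.ofReal δ →
      volume (f '' U) ≤ ENNReal.ofReal ε := by
  obtain ⟨δ, hδ, H⟩ := hf.exists_finset_sum_lt hε
  refine ⟨δ, hδ, fun U hUab hU hUδ => ?_⟩
  let 𝒞 := connectedComponentIn U '' U
  have hdisj : 𝒞.PairwiseDisjoint id := pairwiseDisjoint_image_connectedComponentIn U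
  have h𝒞 : ∀ C ∈ 𝒞, IsPreconnected C ∧ C ⊆ U := by
    rintro _ ⟨z, -, rfl⟩
    exact ⟨isPreconnected_connectedComponentIn, connectedComponentIn_subset U z⟩
  choose! x y hx hxy hy hIoo himage using fun C hC =>
    (h𝒞 C hC).1.exists_Ioo_subset_volume_image_le (hf.continuousOn hab) hab
      ((h𝒞 C hC).2.trans (hUab.trans Ioo_subset_Icc_self))
  have hfinite (F : Finset 𝒞) : ∑ C ∈ F, volume (f '' C) ≤ ENNReal.ofReal ε := by
    have hFdisj : (F : Set 𝒞).PairwiseDisjoint fun C => Ioo (x C) (y C) :=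
      fun C _ C' _ hne =>
        (hdisj C.2 C'.2 (Subtype.coe_injective.ne hne)).mono (hIoo C C.2) (hIoo C' C'.2)
    have hlen : ∑ C ∈ F, (y C - x C) < δ := by
      rw [← ENNReal.ofReal_lt_ofReal_iff hδ,
        ENNReal.ofReal_sum_of_nonneg fun (C : 𝒞) _ => sub_nonneg.2 (hxy C C.2)]
      calc ∑ C ∈ F, ENNReal.ofReal (y C - x C) = volume (⋃ C ∈ F, Ioo (x C) (y C)) := by
            rw [measure_biUnion_finset hFdisj fun C _ => measurableSet_Ioo]
            simp only [Real.volume_Ioo]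
        _ ≤ volume U := measure_mono (iUnion₂_subset fun C _ =>
            (hIoo C C.2).trans (h𝒞 C C.2).2)
        _ < ENNReal.ofReal δ := hUδ
    calc ∑ C ∈ F, volume (f '' C) ≤ ∑ C ∈ F, ENNReal.ofReal |f (y C) - f (x C)| :=
          Finset.sum_le_sum fun C _ => himage C C.2
      _ = ENNReal.ofReal (∑ C ∈ F, |f (y C) - f (x C)|) :=
          (ENNReal.ofReal_sum_of_nonneg fun C _ => abs_nonneg _).symm
      _ ≤ ENNReal.ofReal ε := ENNReal.ofReal_le_ofReal (H F _ _ (fun C _ =>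
          ⟨hx C C.2, hxy C C.2, hy C C.2⟩) hFdisj hlen).le
  calc volume (f '' U) ≤ volume (⋃ C ∈ 𝒞, f '' C) := measure_mono fun _ ⟨z, hz, hfz⟩ =>
        mem_biUnion (mem_image_of_mem _ hz) ⟨z, mem_connectedComponentIn hz, hfz⟩
    _ ≤ ∑' C : 𝒞, volume (f '' C) := measure_biUnion_le _ hU.countable_image_connectedComponentIn _
    _ ≤ ENNReal.ofReal ε := ENNReal.summable.tsum_le_of_sum_le hfinite

theorem AbsolutelyContinuousOn.volume_image_null (hf : AbsolutelyContinuousOn f a b) (hab : a ≤ b)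
    {E : Set ℝ} (hE : E ⊆ Icc a b) (hE0 : volume E = 0) : volume (f '' E) = 0 := by
  have hsplit : f '' E ⊆ f '' (E ∩ Ioo a b) ∪ f '' {a, b} := by
    rw [← image_union]
    refine image_mono fun z hz => ?_
    rcases (hE hz).1.eq_or_lt with rfl | haz
    · exact Or.inr (Or.inl rfl)
    rcases (hE hz).2.eq_or_lt with rfl | hzb
    · exact Or.inr (Or.inr rfl)
    exact Or.inl ⟨hz, haz, hzb⟩
  refine measure_mono_null hsplit (measure_union_null ?_ (((toFinite _).image f).measure_zero _))
  refine le_antisymm (ENNReal.le_of_forall_pos_le_add fun ε hε _ => ?_) zero_le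
  obtain ⟨δ, hδ, hU⟩ := hf.exists_volume_image_le hab hε
  obtain ⟨U, hEU, hUo, hUδ⟩ := exists_isOpen_lt_of_lt (E ∩ Ioo a b) (ENNReal.ofReal δ)
    (by rw [measure_mono_null inter_subset_left hE0]; exact ENNReal.ofReal_pos.2 hδ)
  calc volume (f '' (E ∩ Ioo a b)) ≤ volume (f '' (U ∩ Ioo a b)) :=
        measure_mono (image_mono (subset_inter hEU inter_subset_right))
    _ ≤ ENNReal.ofReal ε := hU _ inter_subset_right (hUo.inter isOpen_Ioo)
        ((measure_mono inter_subset_left).trans_lt hUδ)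
    _ = 0 + ε := by rw [zero_add, ENNReal.ofReal_coe_nnreal]

theorem volume_image_le_lintegral_abs_deriv {s : Set ℝ} {f' : ℝ → ℝ} (hs : MeasurableSet s)
    (hf' : ∀ x ∈ s, HasDerivWithinAt f (f' x) s x) :
    volume (f '' s) ≤ ∫⁻ x in s, ENNReal.ofReal |f' x| := by
  simpa only [ContinuousLinearMap.det_toSpanSingleton] using
    addHaar_image_le_lintegral_abs_det_fderiv volume hs fun x hx => (hf' x hx).hasFDerivWithinAt

theorem ofReal_abs_sub_le_lintegral_abs_deriv {x y : ℝ} (hxy : x ≤ y)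
    (hf : ContinuousOn f (Icc x y)) (hd : ∀ᵐ z, z ∈ Icc x y → DifferentiableAt ℝ f z)
    (hN : ∀ E ⊆ Icc x y, volume E = 0 → volume (f '' E) = 0) :
    ENNReal.ofReal |f y - f x| ≤ ∫⁻ z in Icc x y, ENNReal.ofReal |deriv f z| := by
  set D := Icc x y ∩ {z | DifferentiableAt ℝ f z}
  have hD : MeasurableSet D := measurableSet_Icc.inter (measurableSet_of_differentiableAt ℝ f)
  have hnull : volume (f '' (Icc x y \ D)) = 0 := by
    refine hN _ sdiff_subset (measure_mono_null ?_ (ae_iff.1 hd))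
    exact fun z hz h => hz.2 ⟨hz.1, h hz.1⟩
  calc ENNReal.ofReal |f y - f x| = volume (uIcc (f x) (f y)) := Real.volume_interval.symm
    _ ≤ volume (f '' Icc x y) := by
        rw [← uIcc_of_le hxy] at hf ⊢
        exact measure_mono (intermediate_value_uIcc hf)
    _ ≤ volume (f '' D ∪ f '' (Icc x y \ D)) := by
        rw [← image_union]
        exact measure_mono (image_mono fun z hz => (em (z ∈ D)).imp id fun h => ⟨hz, h⟩)
    _ ≤ volume (f '' D) + volume (f '' (Icc x y \ D)) := measure_union_le _ _
    _ = volume (f '' D) := by rw [hnull, add_zero]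
    _ ≤ ∫⁻ z in D, ENNReal.ofReal |deriv f z| :=
        volume_image_le_lintegral_abs_deriv hD fun z hz => hz.2.hasDerivAt.hasDerivWithinAt
    _ ≤ ∫⁻ z in Icc x y, ENNReal.ofReal |deriv f z| := lintegral_mono_set inter_subset_left

theorem abs_sub_le_integral_abs_deriv {x y : ℝ} (hxy : x ≤ y)
    (hf : ContinuousOn f (Icc x y)) (hd : ∀ᵐ z, z ∈ Icc x y → DifferentiableAt ℝ f z)
    (hN : ∀ E ⊆ Icc x y, volume E = 0 → volume (f '' E) = 0)
    (hint : IntervalIntegrable (deriv f) volume x y) :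
    |f y - f x| ≤ ∫ z in x..y, |deriv f z| := by
  have hint' : IntegrableOn (fun z => |deriv f z|) (Icc x y) :=
    ((intervalIntegrable_iff_integrableOn_Icc_of_le hxy).1 hint).abs
  rw [intervalIntegral.integral_of_le hxy, ← integral_Icc_eq_integral_Ioc,
    ← ENNReal.ofReal_le_ofReal_iff (integral_nonneg fun z => abs_nonneg _),
    ofReal_integral_eq_lintegral_ofReal hint' (ae_of_all _ fun z => abs_nonneg _)]
  exact ofReal_abs_sub_le_lintegral_abs_deriv hxy hf hd hN

theorem absolutelyContinuousOn_of_boundedVariationOn (hab : a ≤ b)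
    (hf : ContinuousOn f (Icc a b)) (hBV : BoundedVariationOn f (Icc a b))
    (hN : ∀ E ⊆ Icc a b, volume E = 0 → volume (f '' E) = 0) : AbsolutelyContinuousOn f a b := by
  rw [← uIcc_of_le hab] at hBV
  have hint := hBV.intervalIntegrable_deriv
  have hd := hBV.ae_differentiableAt_of_mem_uIcc
  rw [uIcc_of_le hab] at hd
  have hG : AbsolutelyContinuousOn (fun x => ∫ z in a..x, |deriv f z|) a b :=
    (hint.abs.absolutelyContinuousOnInterval_intervalIntegral left_mem_uIcc).absolutelyContinuousOn
      hab
  refine hG.of_abs_sub_le fun x y hax hxy hyb => ?_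
  have hsub : Icc x y ⊆ Icc a b := Icc_subset_Icc hax hyb
  have hint_on {c d : ℝ} (hac : a ≤ c) (hdb : d ≤ b) (hcd : c ≤ d) :
      IntervalIntegrable (deriv f) volume c d :=
    hint.mono_set (by rw [uIcc_of_le hab, uIcc_of_le hcd]; exact Icc_subset_Icc hac hdb)
  rw [intervalIntegral.integral_interval_sub_left (hint_on le_rfl hyb (hax.trans hxy)).abs
    (hint_on le_rfl (hxy.trans hyb) hax).abs]
  exact abs_sub_le_integral_abs_deriv hxy (hf.mono hsub) (hd.mono fun z hz hz' => hz (hsub hz'))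
    (fun E hE => hN E (hE.trans hsub)) (hint_on hax hyb hxy)

end

/-- Banach–Zarecki Theorem: `f` is absolutely continuous on `[a,b]` if and only if it is
continuous on `[a,b]`, of bounded variation on `[a,b]`, and maps subsets of `[a,b]` of
Lebesgue measure zero to sets of measure zero. -/
theorem banach_zarecki (a b : ℝ) (hab : a ≤ b) (f : ℝ → ℝ) :
    AbsolutelyContinuousOn f a b ↔
      ContinuousOn f (Icc a b) ∧ BoundedVariationOn f (Icc a b) ∧
        ∀ E ⊆ Icc a b, volume E = 0 → volume (f '' E) = 0 :=
  ⟨fun hf => ⟨hf.continuousOn hab, hf.boundedVariationOn hab,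
      fun _ hE hE0 => hf.volume_image_null hab hE hE0⟩,
    fun ⟨hf, hBV, hN⟩ => absolutelyContinuousOn_of_boundedVariationOn hab hf hBV hN⟩
end

section
/- Let F and f be real-valued functions on [c,d] with F' = f almost everywhere on [c,d], and let u : [a,b] → [c,d] be such that u and F ∘ u are differentiable almost everywhere on [a,b]. If F maps sets of Lebesgue measure zero to sets of Lebesgue measure zero, then (F ∘ u)' = (f ∘ u) · u' almost everywhere on [a,b] (where on the set where f ∘ u is undefined the product is interpreted to be 0, which is valid since u' = 0 a.e. there). -/
/-!
Let `E` be the null set where `F' = f` fails. On `u⁻¹(E)` both `u` and `F ∘ u` take values in a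
null set (`E`, resp. `F(E)`), so it suffices to know that the derivative of a map vanishes a.e. on
a set with null image. Where the derivative is nonzero the map is locally expanding, so the set
splits into countably many pieces on each of which the map is antilipschitz; antilipschitz maps
do not decrease Hausdorff measure, so each piece is null. Hence `u' = 0` and `(F ∘ u)' = 0` a.e.
on `u⁻¹(E)`, and off `u⁻¹(E)` the ordinary chain rule applies.
-/

open MeasureTheory Set Filter Topology Metric
open scoped NNReal ENNReal

theorem AntilipschitzWith.le_hausdorffMeasure_image_of_domRestrict {X Y : Type*}
    [EMetricSpace X] [MeasurableSpace X] [BorelSpace X]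
    [EMetricSpace Y] [MeasurableSpace Y] [BorelSpace Y]
    {f : X → Y} {s : Set X} {K : ℝ≥0} {d : ℝ} (hf : AntilipschitzWith K (s.domRestrict f))
    (hd : 0 ≤ d) : μH[d] s ≤ (K : ℝ≥0∞) ^ d * μH[d] (f '' s) :=
  calc μH[d] s = μH[d] (univ : Set s) := by
        rw [← (isometry_subtype_coe (s := s)).hausdorffMeasure_image (Or.inl hd), image_univ,
          Subtype.range_coe]
    _ ≤ (K : ℝ≥0∞) ^ d * μH[d] (s.domRestrict f '' univ) :=
        hf.le_hausdorffMeasure_image hd _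
    _ = (K : ℝ≥0∞) ^ d * μH[d] (f '' s) := by rw [image_univ, range_domRestrict]

theorem hausdorffMeasure_eq_zero_of_image_of_eventually_dist_le_mul {X Y : Type*}
    [MetricSpace X] [SecondCountableTopology X] [MeasurableSpace X] [BorelSpace X]
    [MetricSpace Y] [MeasurableSpace Y] [BorelSpace Y]
    {f : X → Y} {s : Set X} {d : ℝ} (hd : 0 ≤ d)
    (hf : ∀ x ∈ s, ∃ K : ℝ, ∀ᶠ y in 𝓝[s] x, dist y x ≤ K * dist (f y) (f x))
    (h0 : μH[d] (f '' s) = 0) : μH[d] s = 0 := by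
  set B : ℕ → Set X := fun n ↦ {x ∈ s | ∀ y ∈ s, dist y x < ((n : ℝ) + 1)⁻¹ →
    dist y x ≤ ((n : ℝ) + 1) * dist (f y) (f x)}
  have hcover : s ⊆ ⋃ n, B n := by
    intro x hx
    obtain ⟨K, hK⟩ := hf x hx
    obtain ⟨r, hr, hball⟩ := Metric.mem_nhdsWithin_iff.1 hK
    obtain ⟨n, hn⟩ := exists_nat_gt (max K r⁻¹)
    have hKn : K ≤ (n : ℝ) + 1 := by linarith [le_max_left K r⁻¹]
    have hrn : ((n : ℝ) + 1)⁻¹ < r :=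
      inv_lt_of_inv_lt₀ hr (by linarith [le_max_right K r⁻¹])
    refine mem_iUnion.2 ⟨n, hx, fun y hy hyx ↦ ?_⟩
    calc dist y x ≤ K * dist (f y) (f x) := hball ⟨hyx.trans hrn, hy⟩
      _ ≤ ((n : ℝ) + 1) * dist (f y) (f x) := by gcongr
  have hB : ∀ n, μH[d] (B n) = 0 := by
    intro n
    set ρ : ℝ := ((n : ℝ) + 1)⁻¹
    refine measure_null_of_locally_null _ fun x hx ↦ ⟨B n ∩ ball x (ρ / 2),
      inter_mem_nhdsWithin _ (ball_mem_nhds _ (by positivity)), ?_⟩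
    have hanti : AntilipschitzWith (n + 1) ((B n ∩ ball x (ρ / 2)).domRestrict f) := by
      refine AntilipschitzWith.of_le_mul_dist fun ⟨y, hyB, hyx⟩ ⟨z, hzB, hzx⟩ ↦ ?_
      have hyz : dist y z < ρ := by
        linarith [dist_triangle_right y z x, mem_ball.1 hyx, mem_ball.1 hzx]
      simpa [Subtype.dist_eq] using hzB.2 y hyB.1 hyz
    have himage : μH[d] (f '' (B n ∩ ball x (ρ / 2))) = 0 :=
      measure_mono_null (image_mono (inter_subset_left.trans (sep_subset _ _))) h0
    simpa [himage] using hanti.le_hausdorffMeasure_image_of_domRestrict hd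
  exact measure_mono_null hcover (measure_iUnion_null hB)

theorem HasDerivWithinAt.exists_eventually_dist_le_mul {𝕜 F : Type*}
    [NontriviallyNormedField 𝕜] [NormedAddCommGroup F] [NormedSpace 𝕜 F]
    {f : 𝕜 → F} {f' : F} {s : Set 𝕜} {x : 𝕜}
    (hf : HasDerivWithinAt f f' s x) (hf' : f' ≠ 0) :
    ∃ K : ℝ, ∀ᶠ y in 𝓝[s] x, dist y x ≤ K * dist (f y) (f x) := by
  obtain ⟨K, hK⟩ := (HasDerivAtFilter.isTheta_sub hf hf').isBigO_symm.bound
  rw [prod_pure, eventually_map] at hK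
  exact ⟨K, by simpa only [dist_eq_norm] using hK⟩

theorem volume_setOf_ne_zero_of_hasDerivWithinAt {v g : ℝ → ℝ} {s : Set ℝ}
    (hv : ∀ t ∈ s, HasDerivWithinAt v (g t) s t) (h0 : volume (v '' s) = 0) :
    volume {t ∈ s | g t ≠ 0} = 0 := by
  rw [← hausdorffMeasure_real] at h0 ⊢
  refine hausdorffMeasure_eq_zero_of_image_of_eventually_dist_le_mul zero_le_one
    (fun t ht ↦ ((hv t ht.1).mono (sep_subset _ _)).exists_eventually_dist_le_mul ht.2) ?_
  exact measure_mono_null (image_mono (sep_subset _ _)) h0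

theorem ae_eq_zero_of_hasDerivWithinAt_of_mem_null {v g : ℝ → ℝ} {T N : Set ℝ}
    (hN : volume N = 0) :
    ∀ᵐ t, t ∈ T → v t ∈ N → HasDerivWithinAt v (g t) T t → g t = 0 := by
  set S := {t ∈ T | v t ∈ N ∧ HasDerivWithinAt v (g t) T t}
  have hS : volume {t ∈ S | g t ≠ 0} = 0 :=
    volume_setOf_ne_zero_of_hasDerivWithinAt (fun t ht ↦ ht.2.2.mono (sep_subset _ _))
      (measure_mono_null (image_subset_iff.2 fun t ht ↦ ht.2.1) hN)
  refine ae_iff.2 (measure_mono_null (fun t ht ↦ ?_) hS)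
  obtain ⟨hT, hvN, hv, hg⟩ :
      t ∈ T ∧ v t ∈ N ∧ HasDerivWithinAt v (g t) T t ∧ g t ≠ 0 := by
    simpa only [mem_ofPred_eq, Classical.not_imp] using ht
  exact ⟨⟨hT, hvN, hv⟩, hg⟩

/-- Serrin–Varberg chain rule: let `F, f : [c,d] → ℝ` with `F' = f` a.e. on `[c,d]`, and
let `u : [a,b] → [c,d]` be such that `u` (with a.e. derivative `u'`) and `F ∘ u` are
differentiable a.e. on `[a,b]`. If `F` maps sets of measure zero to sets of measure
zero, then `(F ∘ u)' = (f ∘ u) · u'` a.e. on `[a,b]`. -/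
theorem serrin_varberg_chain_rule (a b c d : ℝ) (F f u u' : ℝ → ℝ)
    (hmaps : MapsTo u (Icc a b) (Icc c d))
    (hF : ∀ᵐ x ∂(volume.restrict (Icc c d)), HasDerivWithinAt F (f x) (Icc c d) x)
    (hu : ∀ᵐ t ∂(volume.restrict (Icc a b)), HasDerivWithinAt u (u' t) (Icc a b) t)
    (hFu : ∀ᵐ t ∂(volume.restrict (Icc a b)),
      ∃ e : ℝ, HasDerivWithinAt (F ∘ u) e (Icc a b) t)
    (hnull : ∀ E ⊆ Icc c d, volume E = 0 → volume (F '' E) = 0) :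
    ∀ᵐ t ∂(volume.restrict (Icc a b)),
      HasDerivWithinAt (F ∘ u) (f (u t) * u' t) (Icc a b) t := by
  set E := {x ∈ Icc c d | ¬HasDerivWithinAt F (f x) (Icc c d) x}
  have hE : volume E = 0 := by
    have hF' := (ae_restrict_iff' measurableSet_Icc).1 hF
    rw [ae_iff] at hF'
    exact measure_mono_null (fun x hx ↦ not_imp_of_and_not hx) hF'
  have hFE : volume (F '' E) = 0 := hnull E (sep_subset _ _) hE
  filter_upwards [ae_restrict_mem measurableSet_Icc, hu, hFu,
    ae_restrict_of_ae (ae_eq_zero_of_hasDerivWithinAt_of_mem_null (g := u') hE),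
    ae_restrict_of_ae (ae_eq_zero_of_hasDerivWithinAt_of_mem_null
      (g := derivWithin (F ∘ u) (Icc a b)) hFE)] with t ht htu ⟨e, hte⟩ hu'0 hFu'0
  replace hte := hte.differentiableWithinAt.hasDerivWithinAt
  by_cases hut : u t ∈ E
  · rw [hu'0 ht hut htu, mul_zero, ← hFu'0 ht (mem_image_of_mem F hut) hte]
    exact hte
  · have hFt : HasDerivWithinAt F (f (u t)) (Icc c d) (u t) :=
      not_not.1 fun h ↦ hut ⟨hmaps ht, h⟩
    exact hFt.comp t htu hmaps
end

section
/- Let Γ be the set of absolutely continuous γ : [0,1] → [0,1] with γ(0)=0, γ(1)=1, and γ' ≥ 0 a.e., and let Γ₀ ⊂ Γ consist of those γ with γ' > 0 a.e. Then Γ is closed under composition, Γ₀ is a group under composition (each γ ∈ Γ₀ has inverse γ⁻¹ ∈ Γ₀), and for γ ∈ Γ₀ the inverse satisfies (γ⁻¹)' = 1/(γ' ∘ γ⁻¹) a.e. on [0,1]. -/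
/-!
Everything is reduced to Mathlib's `AbsolutelyContinuousOnInterval`, which is equivalent to the
ε–δ definition used here. By the fundamental theorem of calculus for absolutely continuous
functions, an a.e. nonnegative (positive) derivative makes `γ` (strictly) increasing, and
absolutely continuous maps compose with increasing absolutely continuous ones.

The heart of the matter is a Banach–Zarecki criterion. For `f` increasing on `[a, b]` and `D` its
set of points of differentiability in `(a, b)`, the change of variables formula gives
`|f(D)| = ∫ₐᵇ f'`, while `∫ₐᵇ f' ≤ f b - f a` with equality iff `f` is absolutely continuous; so
`f` is absolutely continuous iff `f(D)` has full measure in `[f a, f b]`.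
* For `γ ∈ Γ₀` the inverse `δ` is differentiable at `γ t` whenever `γ' t > 0`, so `δ(D_δ)` has full
  measure and `δ` is absolutely continuous.
* If `f` is moreover injective, `f([a, b] \ D)` misses the full-measure set `f(D)`, while `f` maps
  null subsets of `D` to null sets: `f` has the Luzin N property. Applied to `γ` and to `δ`, this
  says that `δ` and `γ` pull null sets back to null sets, which is what the a.e. inverse and chain
  rules need.
-/

open MeasureTheory Set

/-- The class `Γ` of warping functions: absolutely continuous `γ : [0,1] → [0,1]` with
`γ 0 = 0`, `γ 1 = 1` and derivative (existing a.e.) nonnegative a.e. -/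
def InGamma (γ : ℝ → ℝ) : Prop :=
  AbsolutelyContinuousOn γ 0 1 ∧ MapsTo γ (Icc (0:ℝ) 1) (Icc (0:ℝ) 1) ∧
  γ 0 = 0 ∧ γ 1 = 1 ∧
  ∀ᵐ t ∂(volume.restrict (Icc (0:ℝ) 1)),
    ∃ d : ℝ, HasDerivWithinAt γ d (Icc (0:ℝ) 1) t ∧ 0 ≤ d

/-- The subclass `Γ₀ ⊆ Γ` of invertible warping functions: those with a.e. positive
derivative. -/
def InGamma0 (γ : ℝ → ℝ) : Prop :=
  InGamma γ ∧
  ∀ᵐ t ∂(volume.restrict (Icc (0:ℝ) 1)),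
    ∃ d : ℝ, HasDerivWithinAt γ d (Icc (0:ℝ) 1) t ∧ 0 < d

open Function

section AbsolutelyContinuous

variable {f g : ℝ → ℝ} {a b c d : ℝ}

theorem absolutelyContinuousOn_iff (hab : a ≤ b) :
    AbsolutelyContinuousOn f a b ↔ AbsolutelyContinuousOnInterval f a b := by
  rw [absolutelyContinuousOnInterval_iff, AbsolutelyContinuousOn]
  refine forall₂_congr fun ε _ => exists_congr fun δ => and_congr_right fun _ =>
    ⟨fun H => ?_, fun H => ?_⟩
  · rintro ⟨n, I⟩ ⟨hI, hdisj⟩ hsum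
    simp only [uIcc_of_le hab, mem_Icc] at hI
    have key := H n (fun i => min (I i).1 (I i).2) (fun i => max (I i).1 (I i).2)
      (fun i => have h := hI i (Finset.mem_range.2 i.isLt)
        ⟨le_min h.1.1 h.2.1, min_le_max, max_le h.1.2 h.2.2⟩)
      (fun i j hij => (hdisj (Finset.mem_range.2 i.isLt) (Finset.mem_range.2 j.isLt)
        (Fin.val_injective.ne hij)).mono Ioo_subset_Ioc_self Ioo_subset_Ioc_self)
    simp only [Finset.sum_range (fun i => dist _ _)] at hsum ⊢
    convert key (by simpa only [max_sub_min_eq_abs', Real.dist_eq] using hsum) using 2 with i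
    rcases le_total (I i).1 (I i).2 with h | h <;> simp [h, Real.dist_eq, abs_sub_comm]
  · intro n x y hxy hdisj hsum
    let I : ℕ → ℝ × ℝ := fun i => if h : i < n then (x ⟨i, h⟩, y ⟨i, h⟩) else 0
    have key := H (n, I) ⟨fun i hi => ?_, fun i hi j hj hij => ?_⟩ ?_
    · simpa [Finset.sum_range, I, Real.dist_eq, abs_sub_comm] using key
    · have := hxy ⟨i, Finset.mem_range.1 hi⟩
      simp only [I, dif_pos (Finset.mem_range.1 hi), uIcc_of_le hab]
      exact ⟨⟨this.1, this.2.1.trans this.2.2⟩, ⟨this.1.trans this.2.1, this.2.2⟩⟩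
    · have := hdisj ⟨i, Finset.mem_range.1 hi⟩ ⟨j, Finset.mem_range.1 hj⟩ (by simpa using hij)
      simp only [Function.onFun, I, dif_pos (Finset.mem_range.1 hi),
        dif_pos (Finset.mem_range.1 hj), uIoc_of_le (hxy _).2.1]
      exact Ioc_disjoint_Ioc.2 (Ioo_disjoint_Ioo.1 this)
    · rw [Finset.sum_range]
      convert hsum using 2 with i
      simp only [I, Fin.is_lt, dif_pos, Real.dist_eq]
      rw [abs_sub_comm]
      exact abs_of_nonneg (sub_nonneg.2 (hxy i).2.1)

theorem AbsolutelyContinuousOnInterval.congr (hf : AbsolutelyContinuousOnInterval f a b)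
    (h : EqOn f g (uIcc a b)) : AbsolutelyContinuousOnInterval g a b := by
  refine Filter.Tendsto.congr' ?_ hf
  refine Filter.eventually_inf_principal.2 (Filter.Eventually.of_forall fun E hE => ?_)
  exact Finset.sum_congr rfl fun i hi => by rw [h (hE.1 i hi).1, h (hE.1 i hi).2]

theorem AbsolutelyContinuousOn.comp (hg : AbsolutelyContinuousOn g c d)
    (hf : AbsolutelyContinuousOn f a b) (hmono : MonotoneOn f (Icc a b))
    (hmaps : MapsTo f (Icc a b) (Icc c d)) : AbsolutelyContinuousOn (g ∘ f) a b := by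
  intro ε hε
  obtain ⟨η, hη, Hg⟩ := hg ε hε
  obtain ⟨δ, hδ, Hf⟩ := hf η hη
  refine ⟨δ, hδ, fun n x y hxy hdisj hsum => ?_⟩
  have hx i : x i ∈ Icc a b := ⟨(hxy i).1, (hxy i).2.1.trans (hxy i).2.2⟩
  have hy i : y i ∈ Icc a b := ⟨(hxy i).1.trans (hxy i).2.1, (hxy i).2.2⟩
  have hfxy i : f (x i) ≤ f (y i) := hmono (hx i) (hy i) (hxy i).2.1
  refine Hg n (f ∘ x) (f ∘ y) (fun i => ⟨(hmaps (hx i)).1, hfxy i, (hmaps (hy i)).2⟩)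
    (fun i j hij => ?_) ?_
  · have h := Ioo_disjoint_Ioo.1 (hdisj i j hij)
    rw [Ioo_disjoint_Ioo, Function.comp_apply, Function.comp_apply, Function.comp_apply,
      Function.comp_apply, ← hmono.map_min (hy i) (hy j), ← hmono.map_max (hx i) (hx j)]
    exact hmono (min_rec' _ (hy i) (hy j)) (max_rec' _ (hx i) (hx j)) h
  · simpa only [Function.comp_apply, abs_of_nonneg (sub_nonneg.2 (hfxy _))]
      using Hf n x y hxy hdisj hsum

theorem AbsolutelyContinuousOnInterval.monotoneOn_of_ae_deriv_nonneg (hab : a ≤ b)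
    (hf : AbsolutelyContinuousOnInterval f a b)
    (hf' : ∀ᵐ x ∂volume.restrict (Icc a b), 0 ≤ deriv f x) : MonotoneOn f (Icc a b) := by
  intro x hx y hy hxy
  have hsub : uIcc x y ⊆ uIcc a b := by
    rw [uIcc_of_le hxy, uIcc_of_le hab]
    exact Icc_subset_Icc hx.1 hy.2
  rw [← sub_nonneg, ← (hf.mono hsub).integral_deriv_eq_sub]
  exact intervalIntegral.integral_nonneg_of_ae_restrict hxy
    (ae_restrict_of_ae_restrict_of_subset (Icc_subset_Icc hx.1 hy.2) hf')

theorem MonotoneOn.strictMonoOn_of_ae_deriv_pos (hf : MonotoneOn f (Icc a b))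
    (hf' : ∀ᵐ x ∂volume.restrict (Icc a b), 0 < deriv f x) : StrictMonoOn f (Icc a b) := by
  intro x hx y hy hxy
  refine (hf hx hy hxy.le).lt_of_ne fun hfxy => ?_
  have hconst : ∀ u ∈ Ioo x y, f u = f x := fun u hu =>
    le_antisymm (hfxy ▸ hf ⟨hx.1.trans hu.1.le, hu.2.le.trans hy.2⟩ hy hu.2.le)
      (hf hx ⟨hx.1.trans hu.1.le, hu.2.le.trans hy.2⟩ hu.1.le)
  have : (ae (volume.restrict (Ioo x y))).NeBot := ae_restrict_neBot.2 (by simp [hxy])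
  obtain ⟨t, htpos, ht⟩ := ((ae_restrict_of_ae_restrict_of_subset
    (Ioo_subset_Icc_self.trans (Icc_subset_Icc hx.1 hy.2)) hf').and
    (ae_restrict_mem measurableSet_Ioo)).exists
  have hloc : f =ᶠ[nhds t] fun _ => f x :=
    Filter.eventually_of_mem (Ioo_mem_nhds ht.1 ht.2) hconst
  rw [hloc.deriv_eq, deriv_const] at htpos
  exact htpos.false

theorem MonotoneOn.integral_deriv_mem_Icc (hab : a ≤ b) (hf : MonotoneOn f (Icc a b)) :
    ∫ x in a..b, deriv f x ∈ Icc 0 (f b - f a) := by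
  rw [← uIcc_of_le hab] at hf
  have h := hf.intervalIntegral_deriv_mem_uIcc
  rwa [uIcc_of_le (sub_nonneg.2 (hf left_mem_uIcc right_mem_uIcc hab))] at h

theorem MonotoneOn.absolutelyContinuousOnInterval_of_integral_deriv_eq (hab : a ≤ b)
    (hf : MonotoneOn f (Icc a b)) (h : ∫ x in a..b, deriv f x = f b - f a) :
    AbsolutelyContinuousOnInterval f a b := by
  have hint : IntervalIntegrable (deriv f) volume a b :=
    (uIcc_of_le hab ▸ hf).intervalIntegrable_deriv
  refine ((LipschitzWith.const (f a)).lipschitzOnWith.absolutelyContinuousOnInterval.add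
    (hint.absolutelyContinuousOnInterval_intervalIntegral left_mem_uIcc)).congr fun x hx => ?_
  have hx' : x ∈ Icc a b := uIcc_of_le hab ▸ hx
  -- `∫ a..x` and `∫ x..b` are at most the increments of `f` and add up to `f b - f a`,
  -- so both bounds are equalities.
  have h₁ := (hf.mono (Icc_subset_Icc_right hx'.2)).integral_deriv_mem_Icc hx'.1
  have h₂ := (hf.mono (Icc_subset_Icc_left hx'.1)).integral_deriv_mem_Icc hx'.2
  have hsum := intervalIntegral.integral_add_adjacent_intervals
    (hint.mono_set (uIcc_subset_uIcc left_mem_uIcc hx))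
    (hint.mono_set (uIcc_subset_uIcc hx right_mem_uIcc))
  simp only [Pi.add_apply]
  linarith [h₁.2, h₂.2]

theorem MonotoneOn.volume_image_setOf_differentiableAt (hab : a ≤ b)
    (hf : MonotoneOn f (Icc a b)) :
    volume (f '' {x ∈ Ioo a b | DifferentiableAt ℝ f x}) =
      ENNReal.ofReal (∫ x in a..b, deriv f x) := by
  set D := {x ∈ Ioo a b | DifferentiableAt ℝ f x}
  have hD : MeasurableSet D := measurableSet_Ioo.inter (measurableSet_of_differentiableAt ℝ f)
  have hDIoc : D =ᵐ[volume] Ioc a b := by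
    refine (Filter.EventuallyEq.trans ?_ Ioo_ae_eq_Ioc)
    filter_upwards [hf.ae_differentiableWithinAt_of_mem] with x hx
    exact propext ⟨fun h => h.1, fun h =>
      ⟨h, (hx (Ioo_subset_Icc_self h)).differentiableAt (Icc_mem_nhds h.1 h.2)⟩⟩
  have hderiv : ∀ x ∈ D, 0 ≤ deriv f x := fun x hx => by
    rw [← derivWithin_of_mem_nhds (Icc_mem_nhds hx.1.1 hx.1.2)]
    exact hf.derivWithin_nonneg
  rw [← lintegral_deriv_eq_volume_image_of_monotoneOn hD
    (fun x hx => hx.2.hasDerivAt.hasDerivWithinAt) (hf.mono fun x hx => Ioo_subset_Icc_self hx.1),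
    intervalIntegral.integral_of_le hab, ← setIntegral_congr_set hDIoc,
    ofReal_integral_eq_lintegral_ofReal]
  · exact ((uIcc_of_le hab ▸ hf).intervalIntegrable_deriv.1).mono_set
      fun x hx => Ioo_subset_Ioc_self hx.1
  · exact ae_restrict_of_forall_mem hD hderiv

theorem MonotoneOn.absolutelyContinuousOnInterval_iff_ae_le_image (hab : a ≤ b)
    (hf : MonotoneOn f (Icc a b)) :
    AbsolutelyContinuousOnInterval f a b ↔
      Icc (f a) (f b) ≤ᵐ[volume] f '' {x ∈ Ioo a b | DifferentiableAt ℝ f x} := by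
  set D := {x ∈ Ioo a b | DifferentiableAt ℝ f x}
  have hDI : D ⊆ Icc a b := fun x hx => Ioo_subset_Icc_self hx.1
  have himage : f '' D ⊆ Icc (f a) (f b) := image_subset_iff.2 fun x hx =>
    ⟨hf (left_mem_Icc.2 hab) (hDI hx) hx.1.1.le, hf (hDI hx) (right_mem_Icc.2 hab) hx.1.2.le⟩
  have hmeas : MeasurableSet (f '' D) :=
    (measurableSet_Ioo.inter (measurableSet_of_differentiableAt ℝ f)).image_of_monotoneOn
      (hf.mono hDI)
  have hint := hf.integral_deriv_mem_Icc hab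
  rw [ae_le_set, measure_sdiff himage hmeas.nullMeasurableSet
      ((measure_mono himage).trans_lt measure_Icc_lt_top).ne,
    hf.volume_image_setOf_differentiableAt hab, Real.volume_Icc, tsub_eq_zero_iff_le,
    ENNReal.ofReal_le_ofReal_iff hint.1]
  exact ⟨fun h => h.integral_deriv_eq_sub.ge,
    fun h => hf.absolutelyContinuousOnInterval_of_integral_deriv_eq hab (le_antisymm hint.2 h)⟩

theorem AbsolutelyContinuousOnInterval.volume_image_eq_zero_of_strictMonoOn (hab : a ≤ b)
    (hf : AbsolutelyContinuousOnInterval f a b) (hmono : StrictMonoOn f (Icc a b)) {N : Set ℝ}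
    (hN : N ⊆ Icc a b) (hN₀ : volume N = 0) : volume (f '' N) = 0 := by
  set D := {x ∈ Ioo a b | DifferentiableAt ℝ f x}
  have hgap : volume (Icc (f a) (f b) \ f '' D) = 0 := ae_le_set.1
    ((hmono.monotoneOn.absolutelyContinuousOnInterval_iff_ae_le_image hab).1 hf)
  have hND : volume (f '' (N ∩ D)) = 0 :=
    addHaar_image_eq_zero_of_differentiableOn_of_addHaar_eq_zero volume
      (fun x hx => hx.2.2.differentiableWithinAt) (measure_mono_null inter_subset_left hN₀)
  refine measure_mono_null ?_ (measure_union_null hND hgap)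
  rintro _ ⟨x, hxN, rfl⟩
  by_cases hxD : x ∈ D
  · exact Or.inl ⟨x, ⟨hxN, hxD⟩, rfl⟩
  -- Injectivity keeps the image of `N \ D` off the full-measure set `f '' D`.
  refine Or.inr ⟨⟨hmono.monotoneOn (left_mem_Icc.2 hab) (hN hxN) (hN hxN).1,
    hmono.monotoneOn (hN hxN) (right_mem_Icc.2 hab) (hN hxN).2⟩, ?_⟩
  rintro ⟨z, hz, hzx⟩
  exact hxD (hmono.injOn (Ioo_subset_Icc_self hz.1) (hN hxN) hzx ▸ hz)

theorem AbsolutelyContinuousOnInterval.ae_restrict_comp_of_leftInvOn (hab : a ≤ b)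
    (hg : AbsolutelyContinuousOnInterval g a b) (hmono : StrictMonoOn g (Icc a b))
    (hgf : LeftInvOn g f (Icc a b)) (hf : MapsTo f (Icc a b) (Icc a b)) {p : ℝ → Prop}
    (hp : ∀ᵐ t ∂volume.restrict (Icc a b), p t) :
    ∀ᵐ t ∂volume.restrict (Icc a b), p (f t) := by
  set N := {t | ¬p t} ∩ Icc a b
  have hN₀ : volume N = 0 := by
    rw [← Measure.restrict_apply' measurableSet_Icc]
    exact ae_iff.1 hp
  have hgN := hg.volume_image_eq_zero_of_strictMonoOn hab hmono inter_subset_right hN₀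
  filter_upwards [ae_restrict_of_ae (measure_eq_zero_iff_ae_notMem.1 hgN),
    ae_restrict_mem measurableSet_Icc] with t ht htI
  by_contra hpt
  exact ht ⟨f t, ⟨hpt, hf htI⟩, hgf htI⟩

theorem ae_restrict_Icc_mem_Ioo : ∀ᵐ t ∂volume.restrict (Icc a b), t ∈ Ioo a b := by
  rw [← Measure.restrict_congr_set Ioo_ae_eq_Icc]
  exact ae_restrict_mem measurableSet_Ioo

theorem ae_restrict_Icc_hasDerivAt_of_hasDerivWithinAt {p : ℝ → Prop}
    (h : ∀ᵐ t ∂volume.restrict (Icc a b), ∃ d, HasDerivWithinAt f d (Icc a b) t ∧ p d) :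
    ∀ᵐ t ∂volume.restrict (Icc a b), ∃ d, HasDerivAt f d t ∧ p d := by
  filter_upwards [h, ae_restrict_Icc_mem_Ioo] with t ⟨d, hd, hp⟩ ht
  exact ⟨d, hd.hasDerivAt (Icc_mem_nhds ht.1 ht.2), hp⟩

theorem MonotoneOn.ae_restrict_hasDerivWithinAt_nonneg {s : Set ℝ} (hf : MonotoneOn f s)
    (hs : MeasurableSet s) : ∀ᵐ t ∂volume.restrict s, ∃ d, HasDerivWithinAt f d s t ∧ 0 ≤ d := by
  filter_upwards [hf.ae_differentiableWithinAt hs] with t ht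
  exact ⟨_, ht.hasDerivWithinAt, hf.derivWithin_nonneg⟩

theorem StrictMonoOn.strictMonoOn_invFunOn {α β : Type*} [LinearOrder α] [Preorder β]
    [Nonempty α] {f : α → β} {s : Set α} {t : Set β} (hf : StrictMonoOn f s)
    (hst : SurjOn f s t) : StrictMonoOn (invFunOn f s) t := by
  intro x hx y hy hxy
  rwa [← hf.lt_iff_lt (hst.mapsTo_invFunOn hx) (hst.mapsTo_invFunOn hy),
    hst.rightInvOn_invFunOn hx, hst.rightInvOn_invFunOn hy]

end AbsolutelyContinuous

namespace InGamma

variable {γ γ₁ γ₂ : ℝ → ℝ}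

theorem absolutelyContinuousOnInterval (hγ : InGamma γ) : AbsolutelyContinuousOnInterval γ 0 1 :=
  (absolutelyContinuousOn_iff zero_le_one).1 hγ.1

theorem monotoneOn (hγ : InGamma γ) : MonotoneOn γ (Icc 0 1) :=
  hγ.absolutelyContinuousOnInterval.monotoneOn_of_ae_deriv_nonneg zero_le_one
    ((ae_restrict_Icc_hasDerivAt_of_hasDerivWithinAt hγ.2.2.2.2).mono
      fun _ ⟨_, hd, hd₀⟩ => hd.deriv ▸ hd₀)

theorem surjOn (hγ : InGamma γ) : SurjOn γ (Icc 0 1) (Icc 0 1) := by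
  have h := intermediate_value_Icc zero_le_one
    (uIcc_of_le (zero_le_one (α := ℝ)) ▸ hγ.absolutelyContinuousOnInterval.continuousOn)
  rwa [hγ.2.2.1, hγ.2.2.2.1] at h

theorem comp (h₁ : InGamma γ₁) (h₂ : InGamma γ₂) : InGamma (γ₁ ∘ γ₂) :=
  ⟨h₁.1.comp h₂.1 h₂.monotoneOn h₂.2.1, h₁.2.1.comp h₂.2.1,
    by simp [h₂.2.2.1, h₁.2.2.1], by simp [h₂.2.2.2.1, h₁.2.2.2.1],
    (h₁.monotoneOn.comp h₂.monotoneOn h₂.2.1).ae_restrict_hasDerivWithinAt_nonneg measurableSet_Icc⟩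

end InGamma

namespace InGamma0

variable {γ γ₁ γ₂ : ℝ → ℝ}

theorem strictMonoOn (hγ : InGamma0 γ) : StrictMonoOn γ (Icc 0 1) :=
  hγ.1.monotoneOn.strictMonoOn_of_ae_deriv_pos
    ((ae_restrict_Icc_hasDerivAt_of_hasDerivWithinAt hγ.2).mono
      fun _ ⟨_, hd, hd₀⟩ => hd.deriv ▸ hd₀)

theorem leftInvOn_invFunOn (hγ : InGamma0 γ) : LeftInvOn (invFunOn γ (Icc 0 1)) γ (Icc 0 1) :=
  hγ.strictMonoOn.injOn.leftInvOn_invFunOn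

theorem invFunOn_zero (hγ : InGamma0 γ) : invFunOn γ (Icc 0 1) 0 = 0 := by
  simpa [hγ.1.2.2.1] using hγ.leftInvOn_invFunOn (left_mem_Icc.2 zero_le_one)

theorem invFunOn_one (hγ : InGamma0 γ) : invFunOn γ (Icc 0 1) 1 = 1 := by
  simpa [hγ.1.2.2.2.1] using hγ.leftInvOn_invFunOn (right_mem_Icc.2 zero_le_one)

theorem strictMonoOn_invFunOn (hγ : InGamma0 γ) :
    StrictMonoOn (invFunOn γ (Icc 0 1)) (Icc 0 1) :=
  hγ.strictMonoOn.strictMonoOn_invFunOn hγ.1.surjOn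

theorem hasDerivAt_invFunOn (hγ : InGamma0 γ) {y d : ℝ} (hy : y ∈ Ioo 0 1)
    (hd : HasDerivAt γ d (invFunOn γ (Icc 0 1) y)) (hd₀ : d ≠ 0) :
    HasDerivAt (invFunOn γ (Icc 0 1)) d⁻¹ y := by
  have hI : Icc (0 : ℝ) 1 ∈ nhds y := Icc_mem_nhds hy.1 hy.2
  have hδy := hγ.strictMonoOn_invFunOn.mapsTo_Ioo hy
  rw [hγ.invFunOn_zero, hγ.invFunOn_one] at hδy
  refine hd.of_local_left_inverse (continuousAt_of_monotoneOn_of_image_mem_nhds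
    hγ.strictMonoOn_invFunOn.monotoneOn hI ?_) hd₀
    (Filter.eventually_of_mem hI hγ.1.surjOn.rightInvOn_invFunOn)
  have hδI := hγ.leftInvOn_invFunOn.image_image
  rw [hγ.1.surjOn.image_eq_of_mapsTo hγ.1.2.1] at hδI
  rw [hδI]
  exact Icc_mem_nhds hδy.1 hδy.2

theorem ae_hasDerivAt_invFunOn (hγ : InGamma0 γ) :
    ∀ᵐ y ∂volume.restrict (Icc 0 1), ∃ d, 0 < d ∧ HasDerivAt γ d (invFunOn γ (Icc 0 1) y) ∧
      HasDerivAt (invFunOn γ (Icc 0 1)) d⁻¹ y := by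
  have hδ := hγ.1.absolutelyContinuousOnInterval.ae_restrict_comp_of_leftInvOn zero_le_one
    hγ.strictMonoOn hγ.1.surjOn.rightInvOn_invFunOn hγ.1.surjOn.mapsTo_invFunOn
    (ae_restrict_Icc_hasDerivAt_of_hasDerivWithinAt hγ.2)
  filter_upwards [hδ, ae_restrict_Icc_mem_Ioo] with y ⟨d, hd, hd₀⟩ hy
  exact ⟨d, hd₀, hd, hγ.hasDerivAt_invFunOn hy hd hd₀.ne'⟩

theorem inGamma0_invFunOn (hγ : InGamma0 γ) : InGamma0 (invFunOn γ (Icc 0 1)) := by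
  set δ := invFunOn γ (Icc 0 1)
  have hderiv : ∀ᵐ y ∂volume.restrict (Icc 0 1), ∃ d, HasDerivWithinAt δ d (Icc 0 1) y ∧ 0 < d := by
    filter_upwards [hγ.ae_hasDerivAt_invFunOn] with y ⟨d, hd₀, _, hδd⟩
    exact ⟨d⁻¹, hδd.hasDerivWithinAt, inv_pos.2 hd₀⟩
  have hac : AbsolutelyContinuousOnInterval δ 0 1 := by
    rw [hγ.strictMonoOn_invFunOn.monotoneOn.absolutelyContinuousOnInterval_iff_ae_le_image
      zero_le_one, hγ.invFunOn_zero, hγ.invFunOn_one]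
    refine (ae_restrict_iff' measurableSet_Icc).1 ?_
    filter_upwards [ae_restrict_Icc_hasDerivAt_of_hasDerivWithinAt hγ.2, ae_restrict_Icc_mem_Ioo]
      with t ⟨d, hd, hd₀⟩ ht
    have hγt := hγ.strictMonoOn.mapsTo_Ioo ht
    rw [hγ.1.2.2.1, hγ.1.2.2.2.1] at hγt
    have htδ : δ (γ t) = t := hγ.leftInvOn_invFunOn (Ioo_subset_Icc_self ht)
    have hd' : HasDerivAt γ d (δ (γ t)) := by rwa [htδ]
    exact ⟨γ t, ⟨hγt, (hγ.hasDerivAt_invFunOn hγt hd' hd₀.ne').differentiableAt⟩, htδ⟩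
  exact ⟨⟨(absolutelyContinuousOn_iff zero_le_one).2 hac, hγ.1.surjOn.mapsTo_invFunOn,
    hγ.invFunOn_zero, hγ.invFunOn_one, hderiv.mono fun _ ⟨d, hd, hd₀⟩ => ⟨d, hd, hd₀.le⟩⟩, hderiv⟩

theorem comp (h₁ : InGamma0 γ₁) (h₂ : InGamma0 γ₂) : InGamma0 (γ₁ ∘ γ₂) := by
  refine ⟨h₁.1.comp h₂.1, ?_⟩
  -- `γ₂` pulls null sets back to null sets because its inverse has the Luzin N property.
  have h₁γ₂ := h₂.inGamma0_invFunOn.1.absolutelyContinuousOnInterval.ae_restrict_comp_of_leftInvOn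
    zero_le_one h₂.strictMonoOn_invFunOn h₂.leftInvOn_invFunOn h₂.1.2.1
    (ae_restrict_Icc_hasDerivAt_of_hasDerivWithinAt h₁.2)
  filter_upwards [h₁γ₂, ae_restrict_Icc_hasDerivAt_of_hasDerivWithinAt h₂.2]
    with t ⟨d₁, hd₁, hd₁₀⟩ ⟨d₂, hd₂, hd₂₀⟩
  exact ⟨d₁ * d₂, (hd₁.comp t hd₂).hasDerivWithinAt, mul_pos hd₁₀ hd₂₀⟩

end InGamma0

/-- `Γ` is closed under composition; `Γ₀` is a group under composition: it is closed
under composition and every `γ ∈ Γ₀` has an inverse `δ ∈ Γ₀` which satisfies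
`δ' = 1/(γ' ∘ δ)` a.e. on `[0,1]`. -/
theorem gamma_semigroup_gamma0_group :
    (∀ γ₁ γ₂ : ℝ → ℝ, InGamma γ₁ → InGamma γ₂ → InGamma (γ₁ ∘ γ₂)) ∧
    (∀ γ₁ γ₂ : ℝ → ℝ, InGamma0 γ₁ → InGamma0 γ₂ → InGamma0 (γ₁ ∘ γ₂)) ∧
    (∀ γ : ℝ → ℝ, InGamma0 γ → ∃ δ : ℝ → ℝ, InGamma0 δ ∧
      (∀ t ∈ Icc (0:ℝ) 1, δ (γ t) = t ∧ γ (δ t) = t) ∧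
      ∀ᵐ y ∂(volume.restrict (Icc (0:ℝ) 1)),
        ∃ d : ℝ, HasDerivWithinAt γ d (Icc (0:ℝ) 1) (δ y) ∧
          HasDerivWithinAt δ (1 / d) (Icc (0:ℝ) 1) y) := by
  refine ⟨fun _ _ => InGamma.comp, fun _ _ => InGamma0.comp, fun γ hγ =>
    ⟨invFunOn γ (Icc 0 1), hγ.inGamma0_invFunOn,
      fun t ht => ⟨hγ.leftInvOn_invFunOn ht, hγ.1.surjOn.rightInvOn_invFunOn ht⟩, ?_⟩⟩
  filter_upwards [hγ.ae_hasDerivAt_invFunOn] with y ⟨d, _, hd, hδd⟩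
  exact ⟨d, hd.hasDerivWithinAt, (one_div d).symm ▸ hδd.hasDerivWithinAt⟩
end
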